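/- arXiv:1211.1703 — 6 statements merged into one kernel-verified Lean document; each statement's English description precedes it below -/
import Mathlib

section
/- Consider LP2 with a partial-saturation level c*. Then the function u : 𝒫([n]) → ℝ given by u(S) = max{ c* − cost(S), 0 } is feasible for LP2, and it is the unique maximizer of the LP2 objective over all LP2-feasible functions. -/
open Finset
open scoped BigOperators Classical

/-- The probability of the set `S` of items having high value. -/
def pmass (n : ℕ) (p : Fin n → ℝ) (S : Finset (Fin n)) : ℝ :=
  (∏ i ∈ S, p i) * ∏ i ∈ Sᶜ, (1 - p i)

/-- `cost(S) = Σ_{i ∉ S} d i`. -/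
def cost (n : ℕ) (d : Fin n → ℝ) (S : Finset (Fin n)) : ℝ := ∑ i ∈ Sᶜ, d i

/-- Feasibility for LP2. -/
def LP2Feasible (n : ℕ) (d : Fin n → ℝ) (u : Finset (Fin n) → ℝ) : Prop :=
  (∀ S : Finset (Fin n), ∀ i ∉ S, u (insert i S) - u S ≤ d i) ∧
  (∀ S : Finset (Fin n), 0 ≤ u S)

/-- The LP2 objective. -/
def LP2Obj (n : ℕ) (p x : Fin n → ℝ) (B : ℝ) (u : Finset (Fin n) → ℝ) : ℝ :=
  ∑ S : Finset (Fin n), pmass n p S * ((∑ i ∈ S, x i) - B) * u S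

/-! Every coefficient of the objective other than that of `u univ` is negative, while
feasibility forces `u S ≥ max (u univ - cost S) 0`. Hence the objective of `u` is at most that of
the hinge `S ↦ max (t - cost S) 0` at level `t = u univ`, with equality only if `u` is that hinge.
As a function of `t ≥ 0`, the objective of the hinge is concave and piecewise linear; its slopes
just left and just right of `c*` are the two saturation differences `supply - Σ_{cost < c*} cap`
and `supply - Σ_{cost ≤ c*} cap`, positive and negative, so `c*` is its unique maximizer. -/

section Hinge

variable {ι : Type*}

/- Both one-sided derivatives of the convex hinge `t ↦ max (t - b) 0` at `c` give supporting
lines of it. -/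
lemma max_sub_zero_add_leftDeriv_le (b c t : ℝ) :
    max (c - b) 0 + (if b < c then t - c else 0) ≤ max (t - b) 0 := by
  split_ifs with h
  · rw [max_eq_left (sub_nonneg.mpr h.le)]
    linarith [le_max_left (t - b) 0]
  · rw [max_eq_right (sub_nonpos.mpr (not_lt.mp h))]
    linarith [le_max_right (t - b) 0]

lemma max_sub_zero_add_rightDeriv_le (b c t : ℝ) :
    max (c - b) 0 + (if b ≤ c then t - c else 0) ≤ max (t - b) 0 := by
  split_ifs with h
  · rw [max_eq_left (sub_nonneg.mpr h)]
    linarith [le_max_left (t - b) 0]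
  · rw [max_eq_right (sub_nonpos.mpr (not_le.mp h).le)]
    linarith [le_max_right (t - b) 0]

lemma sum_mul_max_sub_zero_le {s : Finset ι} {w b : ι → ℝ} {c t : ℝ} (hw : ∀ i ∈ s, w i ≤ 0)
    (P : ι → Prop) [DecidablePred P]
    (hP : ∀ i, max (c - b i) 0 + (if P i then t - c else 0) ≤ max (t - b i) 0) :
    ∑ i ∈ s, w i * max (t - b i) 0 ≤
      ∑ i ∈ s, w i * max (c - b i) 0 + (t - c) * ∑ i ∈ s with P i, w i := by
  rw [sum_filter, mul_sum, ← sum_add_distrib]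
  refine sum_le_sum fun i hi => ?_
  have h := mul_le_mul_of_nonpos_left (hP i) (hw i hi)
  split_ifs at h ⊢ <;> linarith

theorem linear_add_sum_mul_max_sub_zero_lt {s : Finset ι} {w b : ι → ℝ} {a c t : ℝ}
    (hw : ∀ i ∈ s, w i ≤ 0)
    (hleft : 0 < a + ∑ i ∈ s with b i < c, w i)
    (hright : a + ∑ i ∈ s with b i ≤ c, w i < 0) (ht : t ≠ c) :
    a * t + ∑ i ∈ s, w i * max (t - b i) 0 < a * c + ∑ i ∈ s, w i * max (c - b i) 0 := by
  rcases ht.lt_or_gt with ht | ht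
  · have := sum_mul_max_sub_zero_le hw _ fun i => max_sub_zero_add_leftDeriv_le (b i) c t
    nlinarith
  · have := sum_mul_max_sub_zero_le hw _ fun i => max_sub_zero_add_rightDeriv_le (b i) c t
    nlinarith

end Hinge

lemma le_add_sum_of_insert_sub_le {α : Type*} [DecidableEq α] {u : Finset α → ℝ} {d : α → ℝ}
    (h : ∀ S, ∀ i ∉ S, u (insert i S) - u S ≤ d i) (S T : Finset α) (hST : Disjoint S T) :
    u (S ∪ T) ≤ u S + ∑ i ∈ T, d i := by
  induction T using Finset.induction_on with
  | empty => simp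
  | insert a T ha ih =>
    rw [disjoint_insert_right] at hST
    have := h (S ∪ T) a (by simp [ha, hST.1])
    rw [union_insert, sum_insert ha]
    linarith [ih hST.2]

section LP2

variable {n : ℕ} {d p x : Fin n → ℝ} {B : ℝ}

abbrev costHinge (n : ℕ) (d : Fin n → ℝ) (c : ℝ) (S : Finset (Fin n)) : ℝ :=
  max (c - cost n d S) 0

def lp2Coeff (n : ℕ) (p x : Fin n → ℝ) (B : ℝ) (S : Finset (Fin n)) : ℝ :=
  pmass n p S * ((∑ i ∈ S, x i) - B)

lemma LP2Obj_eq_sum_lp2Coeff (u : Finset (Fin n) → ℝ) :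
    LP2Obj n p x B u = ∑ S, lp2Coeff n p x B S * u S := rfl

lemma pmass_pos (hp : ∀ i, p i ∈ Set.Ioo (0 : ℝ) 1) (S : Finset (Fin n)) : 0 < pmass n p S :=
  mul_pos (prod_pos fun i _ => (hp i).1) (prod_pos fun i _ => sub_pos.mpr (hp i).2)

lemma lp2Coeff_neg (hp : ∀ i, p i ∈ Set.Ioo (0 : ℝ) 1)
    (hneg : ∀ S : Finset (Fin n), S ≠ univ → ∑ i ∈ S, x i < B) {S : Finset (Fin n)}
    (hS : S ≠ univ) : lp2Coeff n p x B S < 0 :=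
  mul_neg_of_pos_of_neg (pmass_pos hp S) (sub_neg.mpr (hneg S hS))

lemma sum_cap_eq_neg_sum_lp2Coeff (P : Finset (Fin n) → Prop) [DecidablePred P] :
    ∑ S ∈ univ.filter (fun S : Finset (Fin n) => S ≠ univ ∧ P S), pmass n p S * (B - ∑ i ∈ S, x i)
      = -∑ S ∈ (univ.erase univ).filter P, lp2Coeff n p x B S := by
  rw [← sum_neg_distrib]
  refine sum_congr (by ext; simp) fun S _ => ?_
  rw [lp2Coeff]
  ring

lemma cost_nonneg (hd : ∀ i, 0 ≤ d i) (S : Finset (Fin n)) : 0 ≤ cost n d S :=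
  sum_nonneg fun i _ => hd i

lemma cost_univ : cost n d univ = 0 := by simp [cost]

lemma cost_eq_add_cost_insert {S : Finset (Fin n)} {i : Fin n} (hi : i ∉ S) :
    cost n d S = d i + cost n d (insert i S) := by
  rw [cost, cost, compl_insert, add_sum_erase _ d (mem_compl.mpr hi)]

lemma lp2Feasible_costHinge (hd : ∀ i, 0 ≤ d i) (c : ℝ) : LP2Feasible n d (costHinge n d c) := by
  refine ⟨fun S i hi => ?_, fun S => le_max_right _ _⟩
  have hcost := cost_eq_add_cost_insert (d := d) hi
  have hdi := hd i
  simp only [costHinge, sub_le_iff_le_add, max_le_iff]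
  constructor <;> linarith [le_max_left (c - cost n d S) 0, le_max_right (c - cost n d S) 0]

lemma LP2Feasible.le_add_cost {u : Finset (Fin n) → ℝ} (hu : LP2Feasible n d u)
    (S : Finset (Fin n)) : u univ ≤ u S + cost n d S := by
  have h := le_add_sum_of_insert_sub_le hu.1 S Sᶜ disjoint_compl_right
  rwa [union_compl] at h

lemma LP2Feasible.costHinge_le {u : Finset (Fin n) → ℝ} (hu : LP2Feasible n d u)
    (S : Finset (Fin n)) : costHinge n d (u univ) S ≤ u S :=
  max_le (by linarith [hu.le_add_cost S]) (hu.2 S)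

lemma LP2Obj_lt_costHinge (hp : ∀ i, p i ∈ Set.Ioo (0 : ℝ) 1)
    (hneg : ∀ S : Finset (Fin n), S ≠ univ → ∑ i ∈ S, x i < B)
    {u : Finset (Fin n) → ℝ} (hu : LP2Feasible n d u) (hne : u ≠ costHinge n d (u univ)) :
    LP2Obj n p x B u < LP2Obj n p x B (costHinge n d (u univ)) := by
  have huniv : costHinge n d (u univ) univ = u univ := by
    simp [costHinge, cost_univ, hu.2 univ]
  obtain ⟨S, hS⟩ := Function.ne_iff.mp hne
  have hSuniv : S ≠ univ := by rintro rfl; exact hS huniv.symm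
  have hterm : ∀ T ∈ (univ : Finset (Finset (Fin n))),
      lp2Coeff n p x B T * u T ≤ lp2Coeff n p x B T * costHinge n d (u univ) T := by
    intro T _
    rcases eq_or_ne T univ with rfl | hT
    · rw [huniv]
    · exact mul_le_mul_of_nonpos_left (hu.costHinge_le T) (lp2Coeff_neg hp hneg hT).le
  refine sum_lt_sum hterm ⟨S, mem_univ S, ?_⟩
  exact mul_lt_mul_of_neg_left ((hu.costHinge_le S).lt_of_ne (Ne.symm hS))
    (lp2Coeff_neg hp hneg hSuniv)

lemma LP2Obj_costHinge {t : ℝ} (ht : 0 ≤ t) :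
    LP2Obj n p x B (costHinge n d t) = lp2Coeff n p x B univ * t +
      ∑ S ∈ univ.erase univ, lp2Coeff n p x B S * max (t - cost n d S) 0 := by
  rw [LP2Obj_eq_sum_lp2Coeff, ← add_sum_erase _ _ (mem_univ univ)]
  simp [costHinge, cost_univ, ht]

lemma LP2Obj_costHinge_lt (hp : ∀ i, p i ∈ Set.Ioo (0 : ℝ) 1)
    (hneg : ∀ S : Finset (Fin n), S ≠ univ → ∑ i ∈ S, x i < B) {c t : ℝ}
    (hleft : 0 < lp2Coeff n p x B univ +
      ∑ S ∈ (univ.erase univ).filter (fun S => cost n d S < c), lp2Coeff n p x B S)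
    (hright : lp2Coeff n p x B univ +
      ∑ S ∈ (univ.erase univ).filter (fun S => cost n d S ≤ c), lp2Coeff n p x B S < 0)
    (hc : 0 ≤ c) (ht : 0 ≤ t) (htc : t ≠ c) :
    LP2Obj n p x B (costHinge n d t) < LP2Obj n p x B (costHinge n d c) := by
  rw [LP2Obj_costHinge ht, LP2Obj_costHinge hc]
  exact linear_add_sum_mul_max_sub_zero_lt
    (fun S hS => (lp2Coeff_neg hp hneg (ne_of_mem_erase hS)).le) hleft hright htc

lemma LP2Obj_lt_of_ne_costHinge (hp : ∀ i, p i ∈ Set.Ioo (0 : ℝ) 1)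
    (hneg : ∀ S : Finset (Fin n), S ≠ univ → ∑ i ∈ S, x i < B) {c : ℝ}
    (hleft : 0 < lp2Coeff n p x B univ +
      ∑ S ∈ (univ.erase univ).filter (fun S => cost n d S < c), lp2Coeff n p x B S)
    (hright : lp2Coeff n p x B univ +
      ∑ S ∈ (univ.erase univ).filter (fun S => cost n d S ≤ c), lp2Coeff n p x B S < 0)
    (hc : 0 ≤ c) {u : Finset (Fin n) → ℝ} (hu : LP2Feasible n d u) (hne : u ≠ costHinge n d c) :
    LP2Obj n p x B u < LP2Obj n p x B (costHinge n d c) := by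
  rcases eq_or_ne (u univ) c with huc | huc
  · exact huc ▸ LP2Obj_lt_costHinge hp hneg hu (huc ▸ hne)
  · have hle : LP2Obj n p x B u ≤ LP2Obj n p x B (costHinge n d (u univ)) := by
      rcases eq_or_ne u (costHinge n d (u univ)) with h | h
      · exact (congrArg (LP2Obj n p x B) h).le
      · exact (LP2Obj_lt_costHinge hp hneg hu h).le
    exact hle.trans_lt (LP2Obj_costHinge_lt hp hneg hleft hright hc (hu.2 univ) huc)

end LP2

theorem stmt_2_general (n : ℕ) (d p x : Fin n → ℝ) (B : ℝ)
    (hd : ∀ i, 0 < d i) (hp : ∀ i, p i ∈ Set.Ioo (0:ℝ) 1)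
    (hneg : ∀ S : Finset (Fin n), S ≠ Finset.univ → ∑ i ∈ S, x i < B)
    (cstar : ℝ)
    (hcs : ∃ Sstar : Finset (Fin n), Sstar ≠ Finset.univ ∧ cstar = cost n d Sstar)
    (hsat1 :
      ∑ S ∈ Finset.univ.filter
          (fun S : Finset (Fin n) => S ≠ Finset.univ ∧ cost n d S < cstar),
          pmass n p S * (B - ∑ i ∈ S, x i)
        < pmass n p Finset.univ * ((∑ i, x i) - B))
    (hsat2 :
      pmass n p Finset.univ * ((∑ i, x i) - B)
        < ∑ S ∈ Finset.univ.filter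
            (fun S : Finset (Fin n) => S ≠ Finset.univ ∧ cost n d S ≤ cstar),
            pmass n p S * (B - ∑ i ∈ S, x i)) :
    LP2Feasible n d (fun S => max (cstar - cost n d S) 0) ∧
    ∀ u, LP2Feasible n d u →
      LP2Obj n p x B u ≤ LP2Obj n p x B (fun S => max (cstar - cost n d S) 0) ∧
      (LP2Obj n p x B u = LP2Obj n p x B (fun S => max (cstar - cost n d S) 0) →
        u = fun S => max (cstar - cost n d S) 0) := by
  have hd' : ∀ i, 0 ≤ d i := fun i => (hd i).le
  have hc : 0 ≤ cstar := by
    obtain ⟨S, -, rfl⟩ := hcs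
    exact cost_nonneg hd' S
  rw [sum_cap_eq_neg_sum_lp2Coeff] at hsat1 hsat2
  have hleft : 0 < lp2Coeff n p x B univ +
      ∑ S ∈ (univ.erase univ).filter (fun S => cost n d S < cstar), lp2Coeff n p x B S := by
    change _ < lp2Coeff n p x B univ at hsat1
    linarith
  have hright : lp2Coeff n p x B univ +
      ∑ S ∈ (univ.erase univ).filter (fun S => cost n d S ≤ cstar), lp2Coeff n p x B S < 0 := by
    change lp2Coeff n p x B univ < _ at hsat2
    linarith
  refine ⟨lp2Feasible_costHinge hd' cstar, fun u hu => ?_⟩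
  rcases eq_or_ne u (costHinge n d cstar) with rfl | hne
  · exact ⟨le_rfl, fun _ => rfl⟩
  · have hlt := LP2Obj_lt_of_ne_costHinge hp hneg hleft hright hc hu hne
    exact ⟨hlt.le, fun h => absurd h hlt.ne⟩

theorem stmt_2 (n : ℕ) (hn : 1 ≤ n) (d p x : Fin n → ℝ) (B : ℝ)
    (hd : ∀ i, 0 < d i) (hp : ∀ i, p i ∈ Set.Ioo (0:ℝ) 1) (hx : ∀ i, 0 < x i)
    (hpos : B < ∑ i, x i)
    (hneg : ∀ S : Finset (Fin n), S ≠ Finset.univ → ∑ i ∈ S, x i < B)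
    (cstar : ℝ)
    (hcs : ∃ Sstar : Finset (Fin n), Sstar ≠ Finset.univ ∧ cstar = cost n d Sstar)
    (hsat1 :
      ∑ S ∈ Finset.univ.filter
          (fun S : Finset (Fin n) => S ≠ Finset.univ ∧ cost n d S < cstar),
          pmass n p S * (B - ∑ i ∈ S, x i)
        < pmass n p Finset.univ * ((∑ i, x i) - B))
    (hsat2 :
      pmass n p Finset.univ * ((∑ i, x i) - B)
        < ∑ S ∈ Finset.univ.filter
            (fun S : Finset (Fin n) => S ≠ Finset.univ ∧ cost n d S ≤ cstar),
            pmass n p S * (B - ∑ i ∈ S, x i)) :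
    LP2Feasible n d (fun S => max (cstar - cost n d S) 0) ∧
    ∀ u, LP2Feasible n d u →
      LP2Obj n p x B u ≤ LP2Obj n p x B (fun S => max (cstar - cost n d S) 0) ∧
      (LP2Obj n p x B u = LP2Obj n p x B (fun S => max (cstar - cost n d S) 0) →
        u = fun S => max (cstar - cost n d S) 0) :=
  stmt_2_general n d p x B hd hp hneg cstar hcs hsat1 hsat2
end

section
/- Let w_1,…,w_n be positive integers, T a positive integer, and ℓ ∈ {1,…,n}. For m ∈ {1,…,ℓ} set count(m) = #{ S ⊆ [n] : |S| = m and Σ_{i∈S} w_i ≤ T }. Define the list 𝔠_ℓ = (c^ℓ_1,…,c^ℓ_{n+ℓ}) by c^ℓ_i = 4n·w_i for 1 ≤ i ≤ n, c^ℓ_{n+1} = 4nT + 2n, and c^ℓ_i = 1 for n+2 ≤ i ≤ n+ℓ, and let S_ℓ = {n+1, n+2, …, n+ℓ}. Then lexr_{𝔠_ℓ}(S_ℓ) = 1 + Σ_{m=1}^{ℓ} count(m)·C(ℓ−1, ℓ−m), where C denotes the binomial coefficient. -/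
open Finset
open scoped BigOperators Classical

/-- `S' ≤_lex S`: either `S' = S` or the largest element of the symmetric
difference `S' △ S` lies in `S`. -/
def lexLe (S' S : Finset ℕ) : Prop :=
  S' = S ∨ ∃ m ∈ (S' \ S) ∪ (S \ S'), m ∈ S ∧ ∀ b ∈ (S' \ S) ∪ (S \ S'), b ≤ m

/-- The lexicographic rank of `S` among the subsets of `ground`, with respect to the
weights `c`. -/
noncomputable def lexrank (c : ℕ → ℕ) (ground S : Finset ℕ) : ℕ :=
  (ground.powerset.filter (fun S' : Finset ℕ =>
    S'.card = S.card ∧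
      (∑ i ∈ S', c i < ∑ i ∈ S, c i ∨
        (∑ i ∈ S', c i = ∑ i ∈ S, c i ∧ lexLe S' S)))).card

/-- The collection `𝔠_ℓ`: `c i = 4·n·w i` for `1 ≤ i ≤ n`, `c (n+1) = 4·n·T + 2·n`,
and `c i = 1` for `n+2 ≤ i ≤ n+ℓ`. -/
def cColl (n T : ℕ) (w : ℕ → ℕ) : ℕ → ℕ :=
  fun i => if i ≤ n then 4 * n * w i else if i = n + 1 then 4 * n * T + 2 * n else 1

/-- `count(m)`: the number of subsets `S ⊆ [n]` of size `m` with `Σ_{i∈S} w i ≤ T`. -/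
def countW (n T : ℕ) (w : ℕ → ℕ) (m : ℕ) : ℕ :=
  (((Finset.Icc 1 n).powerset).filter
    (fun S : Finset ℕ => S.card = m ∧ ∑ i ∈ S, w i ≤ T)).card

/-! The weights are chosen so that the `c`-sum of a set reads off its data: `4n` times its
`w`-weight on `[n]`, plus `4nT + 2n` if it contains `n + 1`, plus its number of unit elements,
which is at most `ℓ - 1 < 2n`. Hence among the `ℓ`-sets, `S_ℓ` is the only one containing `n + 1`
that does not lie above `S_ℓ` (an element of `[n]` costs at least `4n`), and an `ℓ`-set avoiding
`n + 1` lies below `S_ℓ` exactly when its part `A ⊆ [n]` has `w(A) ≤ T`. Such a set is `A`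
together with `ℓ - |A|` of the `ℓ - 1` unit elements, which gives the binomial factors; `|A| = 0`
contributes nothing because `ℓ - 1 < ℓ`. -/

namespace Finset

variable {α : Type*} [DecidableEq α] {I J S : Finset α}

theorem sum_eq_sum_inter_add_sum_inter {M : Type*} [AddCommMonoid M] (f : α → M)
    (hIJ : Disjoint I J) (hS : S ⊆ I ∪ J) :
    ∑ i ∈ S, f i = ∑ i ∈ S ∩ I, f i + ∑ i ∈ S ∩ J, f i := by
  rw [← sum_union (hIJ.mono inter_subset_right inter_subset_right), ← inter_union_distrib_left,
    inter_eq_left.mpr hS]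

theorem card_eq_card_inter_add_card_inter (hIJ : Disjoint I J) (hS : S ⊆ I ∪ J) :
    #S = #(S ∩ I) + #(S ∩ J) := by
  simpa only [card_eq_sum_ones] using sum_eq_sum_inter_add_sum_inter (fun _ => 1) hIJ hS

theorem card_filter_powerset_union_of_card_inter (hIJ : Disjoint I J)
    (P : Finset α → Prop) [DecidablePred P] {ℓ m : ℕ} (hm : m ≤ ℓ) :
    #{S ∈ (I ∪ J).powerset | (#S = ℓ ∧ P (S ∩ I)) ∧ #(S ∩ I) = m}
      = #{A ∈ I.powerset | #A = m ∧ P A} * (#J).choose (ℓ - m) := by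
  rw [← card_powersetCard, ← card_product]
  have inter_union {A B : Finset α} (hA : A ⊆ I) (hB : B ⊆ J) :
      (A ∪ B) ∩ I = A ∧ (A ∪ B) ∩ J = B := by
    rw [union_inter_distrib_right, union_inter_distrib_right, inter_eq_left.mpr hA,
      inter_eq_left.mpr hB, disjoint_iff_inter_eq_empty.mp (hIJ.symm.mono_left hB),
      disjoint_iff_inter_eq_empty.mp (hIJ.mono_left hA)]
    exact ⟨union_empty A, empty_union B⟩
  refine card_nbij' (fun S => (S ∩ I, S ∩ J)) (fun p => p.1 ∪ p.2) ?_ ?_ ?_ ?_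
  · intro S hS
    simp only [coe_filter, mem_powerset, Set.mem_ofPred_eq] at hS
    obtain ⟨hSIJ, ⟨hcard, hP⟩, hSI⟩ := hS
    have hsplit := card_eq_card_inter_add_card_inter hIJ hSIJ
    simp only [coe_product, coe_filter, mem_powerset, Set.mem_prod, Set.mem_ofPred_eq,
      mem_coe, mem_powersetCard]
    exact ⟨⟨inter_subset_right, hSI, hP⟩, inter_subset_right, by omega⟩
  · rintro ⟨A, B⟩ hp
    simp only [coe_product, coe_filter, mem_powerset, Set.mem_prod, Set.mem_ofPred_eq,
      mem_coe, mem_powersetCard] at hp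
    obtain ⟨⟨hA, hAm, hP⟩, hB, hBcard⟩ := hp
    obtain ⟨hAI, -⟩ := inter_union hA hB
    simp only [coe_filter, mem_powerset, Set.mem_ofPred_eq, hAI]
    refine ⟨union_subset_union hA hB, ⟨?_, hP⟩, hAm⟩
    rw [card_union_of_disjoint (hIJ.mono hA hB)]
    omega
  · intro S hS
    simp only [coe_filter, mem_powerset, Set.mem_ofPred_eq] at hS
    change S ∩ I ∪ S ∩ J = S
    rw [← inter_union_distrib_left, inter_eq_left.mpr hS.1]
  · rintro ⟨A, B⟩ hp
    simp only [coe_product, coe_filter, mem_powerset, Set.mem_prod, Set.mem_ofPred_eq,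
      mem_coe, mem_powersetCard] at hp
    obtain ⟨hAI, hBJ⟩ := inter_union hp.1.1 hp.2.1
    exact Prod.ext hAI hBJ

theorem card_filter_powerset_union (hIJ : Disjoint I J) (P : Finset α → Prop) [DecidablePred P]
    (ℓ : ℕ) :
    #{S ∈ (I ∪ J).powerset | #S = ℓ ∧ P (S ∩ I)}
      = ∑ m ∈ range (ℓ + 1), #{A ∈ I.powerset | #A = m ∧ P A} * (#J).choose (ℓ - m) := by
  rw [card_eq_sum_card_fiberwise (f := fun S => #(S ∩ I)) (t := range (ℓ + 1))]
  · refine sum_congr rfl fun m hm => ?_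
    rw [filter_filter]
    exact card_filter_powerset_union_of_card_inter hIJ P (Nat.lt_succ_iff.mp (mem_range.mp hm))
  · intro S hS
    rw [mem_coe, mem_filter] at hS
    exact mem_range.mpr (Nat.lt_succ_of_le (hS.2.1 ▸ card_le_card inter_subset_left))

end Finset

-- An `abbrev`, so that the filter below picks up the decidability instance used in `lexrank`.
abbrev LexBelow (c : ℕ → ℕ) (S' S : Finset ℕ) : Prop :=
  ∑ i ∈ S', c i < ∑ i ∈ S, c i ∨ (∑ i ∈ S', c i = ∑ i ∈ S, c i ∧ lexLe S' S)

theorem lexrank_eq_card_filter (c : ℕ → ℕ) (ground S : Finset ℕ) :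
    lexrank c ground S = #{S' ∈ ground.powerset | #S' = #S ∧ LexBelow c S' S} :=
  rfl

section Intervals

variable {n ℓ : ℕ} {S : Finset ℕ}

theorem disjoint_Icc_one_Icc_add_two (n ℓ : ℕ) : Disjoint (Icc 1 n) (Icc (n + 2) (n + ℓ)) :=
  disjoint_left.mpr fun a ha hb => by rw [mem_Icc] at ha hb; omega

theorem subset_Icc_union_Icc_iff (hS : S ⊆ Icc 1 (n + ℓ)) :
    S ⊆ Icc 1 n ∪ Icc (n + 2) (n + ℓ) ↔ n + 1 ∉ S := by
  constructor
  · intro h hmem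
    have hmem' := h hmem
    simp only [mem_union, mem_Icc] at hmem'
    omega
  · intro h a ha
    have haS := hS ha
    have hne : a ≠ n + 1 := fun e => h (e ▸ ha)
    simp only [mem_union, mem_Icc] at haS ⊢
    omega

theorem card_Icc_add_two (n ℓ : ℕ) : #(Icc (n + 2) (n + ℓ)) = ℓ - 1 := by
  rw [Nat.card_Icc]
  omega

theorem Icc_add_one_eq_insert (hℓ1 : 1 ≤ ℓ) :
    Icc (n + 1) (n + ℓ) = insert (n + 1) (Icc (n + 2) (n + ℓ)) :=
  (insert_Icc_add_one_left_eq_Icc (by omega)).symm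

end Intervals

namespace cColl

variable {n ℓ T : ℕ} {w : ℕ → ℕ} {S : Finset ℕ}

theorem sum_of_subset_union (hS : S ⊆ Icc 1 n ∪ Icc (n + 2) (n + ℓ)) :
    ∑ i ∈ S, cColl n T w i = 4 * n * ∑ i ∈ S ∩ Icc 1 n, w i + #(S ∩ Icc (n + 2) (n + ℓ)) := by
  rw [sum_eq_sum_inter_add_sum_inter _ (disjoint_Icc_one_Icc_add_two n ℓ) hS, mul_sum,
    card_eq_sum_ones]
  congr 1 <;> refine sum_congr rfl fun i hi => ?_ <;> rw [mem_inter, mem_Icc] at hi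
  · simp [cColl, hi.2.2]
  · simp [cColl, show ¬ i ≤ n by omega, show i ≠ n + 1 by omega]

theorem apply_add_one : cColl n T w (n + 1) = 4 * n * T + 2 * n := by
  simp [cColl]

theorem sum_Icc_add_one (hℓ1 : 1 ≤ ℓ) :
    ∑ i ∈ Icc (n + 1) (n + ℓ), cColl n T w i = 4 * n * T + 2 * n + (ℓ - 1) := by
  rw [Icc_add_one_eq_insert hℓ1, sum_insert (by simp),
    sum_of_subset_union subset_union_right, inter_self,
    disjoint_iff_inter_eq_empty.mp (disjoint_Icc_one_Icc_add_two n ℓ).symm, apply_add_one,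
    card_Icc_add_two, sum_empty, mul_zero, zero_add]

theorem lexBelow_iff_of_subset_union (hℓ1 : 1 ≤ ℓ) (hℓn : ℓ ≤ n)
    (hS : S ⊆ Icc 1 n ∪ Icc (n + 2) (n + ℓ)) :
    LexBelow (cColl n T w) S (Icc (n + 1) (n + ℓ)) ↔ ∑ i ∈ S ∩ Icc 1 n, w i ≤ T := by
  have hB : #(S ∩ Icc (n + 2) (n + ℓ)) ≤ ℓ - 1 :=
    card_Icc_add_two n ℓ ▸ card_le_card inter_subset_right
  rw [LexBelow, sum_of_subset_union hS, sum_Icc_add_one hℓ1]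
  constructor
  · intro hbelow
    by_contra! hT
    have hA := Nat.mul_le_mul_left (4 * n) hT
    rw [Nat.mul_succ] at hA
    omega
  · intro hT
    have hA := Nat.mul_le_mul_left (4 * n) hT
    omega

theorem eq_of_lexBelow_of_mem (hw : ∀ i ∈ Icc 1 n, 0 < w i) (hℓ1 : 1 ≤ ℓ) (hℓn : ℓ ≤ n)
    (hS : S ⊆ Icc 1 (n + ℓ)) (hcard : #S = ℓ) (hmem : n + 1 ∈ S)
    (hbelow : LexBelow (cColl n T w) S (Icc (n + 1) (n + ℓ))) :
    S = Icc (n + 1) (n + ℓ) := by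
  set R := S.erase (n + 1)
  have hR : R ⊆ Icc 1 n ∪ Icc (n + 2) (n + ℓ) :=
    (subset_Icc_union_Icc_iff ((erase_subset _ _).trans hS)).mpr (notMem_erase _ _)
  have hB : #(R ∩ Icc (n + 2) (n + ℓ)) ≤ ℓ - 1 :=
    card_Icc_add_two n ℓ ▸ card_le_card inter_subset_right
  have hwR : ∑ i ∈ R ∩ Icc 1 n, w i = 0 := by
    by_contra hne
    have hA := Nat.le_mul_of_pos_right (4 * n) (Nat.pos_of_ne_zero hne)
    rw [LexBelow, ← insert_erase hmem, sum_insert (notMem_erase _ _), sum_of_subset_union hR,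
      apply_add_one, sum_Icc_add_one hℓ1] at hbelow
    omega
  have hRJ : R ⊆ Icc (n + 2) (n + ℓ) := by
    intro i hi
    rcases mem_union.mp (hR hi) with hI | hJ
    · exact absurd ((sum_eq_zero_iff.mp hwR) i (mem_inter.mpr ⟨hi, hI⟩)) (hw i hI).ne'
    · exact hJ
  have hsub : S ⊆ Icc (n + 1) (n + ℓ) := by
    rw [← insert_erase hmem, Icc_add_one_eq_insert hℓ1]
    exact insert_subset_insert _ hRJ
  exact eq_of_subset_of_card_le hsub (by rw [hcard, Nat.card_Icc]; omega)

theorem filter_lexBelow_eq_insert (hw : ∀ i ∈ Icc 1 n, 0 < w i) (hℓ1 : 1 ≤ ℓ) (hℓn : ℓ ≤ n) :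
    {S ∈ (Icc 1 (n + ℓ)).powerset |
        #S = #(Icc (n + 1) (n + ℓ)) ∧ LexBelow (cColl n T w) S (Icc (n + 1) (n + ℓ))}
      = insert (Icc (n + 1) (n + ℓ))
          {S ∈ (Icc 1 n ∪ Icc (n + 2) (n + ℓ)).powerset | #S = ℓ ∧ ∑ i ∈ S ∩ Icc 1 n, w i ≤ T} := by
  have hcard : #(Icc (n + 1) (n + ℓ)) = ℓ := by rw [Nat.card_Icc]; omega
  ext S
  simp only [mem_filter, mem_powerset, mem_insert, hcard]
  constructor
  · rintro ⟨hS, hSc, hbelow⟩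
    by_cases hmem : n + 1 ∈ S
    · exact Or.inl (eq_of_lexBelow_of_mem hw hℓ1 hℓn hS hSc hmem hbelow)
    · have hSU := (subset_Icc_union_Icc_iff hS).mpr hmem
      exact Or.inr ⟨hSU, hSc, (lexBelow_iff_of_subset_union hℓ1 hℓn hSU).mp hbelow⟩
  · rintro (rfl | ⟨hSU, hSc, hT⟩)
    · exact ⟨Icc_subset_Icc (by omega) le_rfl, hcard, Or.inr ⟨rfl, Or.inl rfl⟩⟩
    · have hSG : S ⊆ Icc 1 (n + ℓ) := hSU.trans
        (union_subset (Icc_subset_Icc le_rfl (by omega)) (Icc_subset_Icc (by omega) le_rfl))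
      exact ⟨hSG, hSc, (lexBelow_iff_of_subset_union hℓ1 hℓn hSU).mpr hT⟩

end cColl

theorem stmt_6_general (n ℓ T : ℕ) (w : ℕ → ℕ)
    (hw : ∀ i ∈ Finset.Icc 1 n, 0 < w i)
    (hℓ1 : 1 ≤ ℓ) (hℓn : ℓ ≤ n) :
    lexrank (cColl n T w) (Finset.Icc 1 (n + ℓ)) (Finset.Icc (n + 1) (n + ℓ))
      = 1 + ∑ m ∈ Finset.Icc 1 ℓ, countW n T w m * Nat.choose (ℓ - 1) (ℓ - m) := by
  have hS₀ : Icc (n + 1) (n + ℓ) ∉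
      {S ∈ (Icc 1 n ∪ Icc (n + 2) (n + ℓ)).powerset | #S = ℓ ∧ ∑ i ∈ S ∩ Icc 1 n, w i ≤ T} :=
    fun h => (subset_Icc_union_Icc_iff (Icc_subset_Icc (by omega) le_rfl)).mp
      (mem_powerset.mp (mem_filter.mp h).1) (by simp [hℓ1])
  rw [lexrank_eq_card_filter, cColl.filter_lexBelow_eq_insert hw hℓ1 hℓn,
    card_insert_of_notMem hS₀,
    card_filter_powerset_union (disjoint_Icc_one_Icc_add_two n ℓ) (fun A => ∑ i ∈ A, w i ≤ T),
    card_Icc_add_two, range_eq_Ico, sum_eq_sum_Ico_succ_bot (by omega : 0 < ℓ + 1),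
    Nat.choose_eq_zero_of_lt (by omega), mul_zero, zero_add, Ico_add_one_right_eq_Icc, add_comm]
  rfl

theorem stmt_6 (n ℓ T : ℕ) (w : ℕ → ℕ)
    (hw : ∀ i ∈ Finset.Icc 1 n, 0 < w i) (hT : 0 < T)
    (hℓ1 : 1 ≤ ℓ) (hℓn : ℓ ≤ n) :
    lexrank (cColl n T w) (Finset.Icc 1 (n + ℓ)) (Finset.Icc (n + 1) (n + ℓ))
      = 1 + ∑ m ∈ Finset.Icc 1 ℓ, countW n T w m * Nat.choose (ℓ - 1) (ℓ - m) :=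
  stmt_6_general n ℓ T w hw hℓ1 hℓn
end

section
/- Let c_1,…,c_n be positive integers and define d_i = 2^{n+1}·(c_i + Σ_{j=1}^n c_j) + 2^i for i ∈ [n]. Then for all T, T' ⊆ [n] with |T| = |T'|: Σ_{i∈T} d_i < Σ_{i∈T'} d_i if and only if ( Σ_{i∈T} c_i < Σ_{i∈T'} c_i, or ( Σ_{i∈T} c_i = Σ_{i∈T'} c_i, T ≠ T', and the largest element of the symmetric difference T△T' lies in T' ) ). -/
/-!
Summing `d i` over `U` gives `2^(n+1) · (Σ_U c + |U| · Σ c) + Σ_U 2^i`, and the last term is below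
`2^(n+1)`. For `|T| = |T'|` the two sums therefore compare lexicographically: first by `Σ c`, then
by the binary numbers `Σ 2^i`, and these compare as the sets in colex order, i.e. by which set holds
the largest element of the symmetric difference.
-/

open Finset
open scoped BigOperators

/-- `d i = 2^(n+1) · (c i + Σ_{j=1}^n c j) + 2^i`. -/
def dBig (n : ℕ) (c : ℕ → ℕ) : ℕ → ℕ :=
  fun i => 2 ^ (n + 1) * (c i + ∑ j ∈ Finset.Icc 1 n, c j) + 2 ^ i

open scoped symmDiff in
theorem Finset.Colex.toColex_lt_toColex_iff_exists_greatest_sdiff_mem {α : Type*}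
    [LinearOrder α] {s t : Finset α} :
    toColex s < toColex t ↔
      s ≠ t ∧ ∃ m ∈ s \ t ∪ t \ s, m ∈ t ∧ ∀ b ∈ s \ t ∪ t \ s, b ≤ m := by
  rw [Colex.toColex_lt_toColex_iff_max'_mem, ← Finset.symmDiff_def]
  constructor
  · rintro ⟨hst, hmax⟩
    exact ⟨hst, _, max'_mem _ _, hmax, fun b hb => le_max' _ b hb⟩
  · rintro ⟨hst, m, hm, hmt, hle⟩
    have hmax : (s ∆ t).max' (symmDiff_nonempty.2 hst) = m :=
      le_antisymm (max'_le _ _ _ hle) (le_max' _ m hm)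
    exact ⟨hst, hmax ▸ hmt⟩

theorem Nat.geomSum_lt_geomSum_iff {b : ℕ} (hb : 2 ≤ b) {s t : Finset ℕ} :
    ∑ i ∈ s, b ^ i < ∑ i ∈ t, b ^ i ↔
      s ≠ t ∧ ∃ m ∈ s \ t ∪ t \ s, m ∈ t ∧ ∀ k ∈ s \ t ∪ t \ s, k ≤ m := by
  rw [Finset.geomSum_lt_geomSum_iff_toColex_lt_toColex hb,
    Finset.Colex.toColex_lt_toColex_iff_exists_greatest_sdiff_mem]

theorem Nat.mul_add_lt_mul_add_iff {K A B a b : ℕ} (ha : a < K) (hb : b < K) :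
    K * A + a < K * B + b ↔ A < B ∨ A = B ∧ a < b := by
  constructor
  · intro h
    rcases lt_trichotomy A B with hAB | rfl | hBA
    · exact Or.inl hAB
    · exact Or.inr ⟨rfl, by omega⟩
    · have := Nat.mul_le_mul_left K hBA
      rw [mul_add_one] at this
      omega
  · rintro (hAB | ⟨rfl, hab⟩)
    · have := Nat.mul_le_mul_left K hAB
      rw [mul_add_one] at this
      omega
    · omega

theorem sum_dBig (n : ℕ) (c : ℕ → ℕ) (U : Finset ℕ) :
    ∑ i ∈ U, dBig n c i =
      2 ^ (n + 1) * (∑ i ∈ U, c i + #U * ∑ j ∈ Icc 1 n, c j) + ∑ i ∈ U, 2 ^ i := by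
  simp only [dBig, sum_add_distrib, ← mul_sum, sum_const, smul_eq_mul]

theorem sum_two_pow_lt_of_subset_Icc {n : ℕ} {U : Finset ℕ} (hU : U ⊆ Icc 1 n) :
    ∑ i ∈ U, 2 ^ i < 2 ^ (n + 1) :=
  Nat.geomSum_lt le_rfl fun _ hi => Nat.lt_succ_of_le (mem_Icc.1 (hU hi)).2

theorem stmt_8_general (n : ℕ) (c : ℕ → ℕ)
    (T T' : Finset ℕ) (hT : T ⊆ Finset.Icc 1 n) (hT' : T' ⊆ Finset.Icc 1 n)
    (hcard : T.card = T'.card) :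
    ∑ i ∈ T, dBig n c i < ∑ i ∈ T', dBig n c i ↔
      (∑ i ∈ T, c i < ∑ i ∈ T', c i ∨
        (∑ i ∈ T, c i = ∑ i ∈ T', c i ∧ T ≠ T' ∧
          ∃ m ∈ (T \ T') ∪ (T' \ T), m ∈ T' ∧ ∀ b ∈ (T \ T') ∪ (T' \ T), b ≤ m)) := by
  rw [sum_dBig, sum_dBig, hcard,
    Nat.mul_add_lt_mul_add_iff (sum_two_pow_lt_of_subset_Icc hT) (sum_two_pow_lt_of_subset_Icc hT'),
    Nat.add_lt_add_iff_right, Nat.add_right_cancel_iff, Nat.geomSum_lt_geomSum_iff le_rfl]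

theorem stmt_8 (n : ℕ) (c : ℕ → ℕ) (hc : ∀ i ∈ Finset.Icc 1 n, 0 < c i)
    (T T' : Finset ℕ) (hT : T ⊆ Finset.Icc 1 n) (hT' : T' ⊆ Finset.Icc 1 n)
    (hcard : T.card = T'.card) :
    ∑ i ∈ T, dBig n c i < ∑ i ∈ T', dBig n c i ↔
      (∑ i ∈ T, c i < ∑ i ∈ T', c i ∨
        (∑ i ∈ T, c i = ∑ i ∈ T', c i ∧ T ≠ T' ∧
          ∃ m ∈ (T \ T') ∪ (T' \ T), m ∈ T' ∧ ∀ b ∈ (T \ T') ∪ (T' \ T), b ≤ m)) :=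
  stmt_8_general n c T T' hT hT' hcard
end

section
/- Let n ≥ 2 and 1 ≤ s ≤ n−1 be integers. Then for every p ∈ (0,1), f(p) ≥ C(n,s) − (2n − 2p + 1 − 2pn) / ( p^{n−s}·(1−p)^{s}·(2s − 2p + 1) ), where C(n,s) is the binomial coefficient. In particular, f(1 − 1/(2n+2)) ≥ C(n,s). -/
/-!
The summand of `f` at index `i` is the Bernstein weight `C(n,i) p^i (1-p)^(n-i)` times the affine
function `2i + 2p - 2n - 1`, so by the mean `np` of the binomial distribution the full sum over
`0 ≤ i ≤ n` equals `2np + 2p - 2n - 1`. The terms with `i < n - s` are nonpositive, and the term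
`i = n - s` is exactly `-C(n,s)` times the denominator `D` of `f`. Hence the numerator of `f` is at
least `C(n,s) D - (2n - 2p + 1 - 2pn)`; at `p = 1 - 1/(2n+2)` the subtracted bracket vanishes.
-/

open Finset
open scoped BigOperators

/-- The function `f(p)` from the choice-of-parameter lemma. -/
noncomputable def ffun (n s : ℕ) (p : ℝ) : ℝ :=
  (∑ i ∈ Finset.Icc (n - s + 1) n,
      (n.choose i : ℝ) * p ^ i * (1 - p) ^ (n - i) * (2 * ((i : ℝ) + p - n) - 1)) /
    (p ^ (n - s) * (1 - p) ^ s * (2 * (s : ℝ) - 2 * p + 1))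

theorem bernsteinPolynomial.sum_eval_mul_affine {R : Type*} [CommRing R] (n : ℕ) (a b x : R) :
    ∑ ν ∈ range (n + 1), (bernsteinPolynomial R n ν).eval x * (a * ν + b) = a * n * x + b := by
  have hmass := congrArg (Polynomial.eval x) (bernsteinPolynomial.sum R n)
  have hmean := congrArg (Polynomial.eval x) (bernsteinPolynomial.sum_smul R n)
  simp only [nsmul_eq_mul, Polynomial.eval_finsetSum, Polynomial.eval_mul,
    Polynomial.eval_natCast, Polynomial.eval_one, Polynomial.eval_X] at hmass hmean
  calc ∑ ν ∈ range (n + 1), (bernsteinPolynomial R n ν).eval x * (a * ν + b)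
      = a * ∑ ν ∈ range (n + 1), ν * (bernsteinPolynomial R n ν).eval x
        + b * ∑ ν ∈ range (n + 1), (bernsteinPolynomial R n ν).eval x := by
        rw [mul_sum, mul_sum, ← sum_add_distrib]
        exact sum_congr rfl fun _ _ => by ring
    _ = a * n * x + b := by rw [hmean, hmass]; ring

noncomputable def ffunSummand (n : ℕ) (p : ℝ) (i : ℕ) : ℝ :=
  (n.choose i : ℝ) * p ^ i * (1 - p) ^ (n - i) * (2 * ((i : ℝ) + p - n) - 1)

noncomputable def ffunDenom (n s : ℕ) (p : ℝ) : ℝ :=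
  p ^ (n - s) * (1 - p) ^ s * (2 * (s : ℝ) - 2 * p + 1)

theorem ffun_eq (n s : ℕ) (p : ℝ) :
    ffun n s p = (∑ i ∈ Icc (n - s + 1) n, ffunSummand n p i) / ffunDenom n s p :=
  rfl

theorem sum_range_ffunSummand (n : ℕ) (p : ℝ) :
    ∑ i ∈ range (n + 1), ffunSummand n p i = 2 * n * p + 2 * p - 2 * n - 1 := by
  have h := bernsteinPolynomial.sum_eval_mul_affine n 2 (2 * p - 2 * n - 1) p
  refine (sum_congr rfl fun i _ => ?_).trans (h.trans (by ring))
  simp only [ffunSummand, bernsteinPolynomial, Polynomial.eval_mul, Polynomial.eval_pow,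
    Polynomial.eval_natCast, Polynomial.eval_X, Polynomial.eval_sub, Polynomial.eval_one]
  ring

theorem ffunSummand_nonpos {n i : ℕ} {p : ℝ} (hp0 : 0 ≤ p) (hp1 : p ≤ 1) (hi : i < n) :
    ffunSummand n p i ≤ 0 := by
  have hi' : (i : ℝ) + 1 ≤ n := by exact_mod_cast hi
  refine mul_nonpos_of_nonneg_of_nonpos ?_ (by linarith)
  have : 0 ≤ 1 - p := by linarith
  positivity

theorem ffunSummand_sub {n s : ℕ} (hs : s ≤ n) (p : ℝ) :
    ffunSummand n p (n - s) = -((n.choose s : ℝ) * ffunDenom n s p) := by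
  rw [ffunSummand, ffunDenom, Nat.choose_symm hs, Nat.sub_sub_self hs, Nat.cast_sub hs]
  ring

theorem choose_mul_ffunDenom_sub_le_sum_Icc {n s : ℕ} (hs : s ≤ n) {p : ℝ} (hp0 : 0 ≤ p)
    (hp1 : p ≤ 1) :
    (n.choose s : ℝ) * ffunDenom n s p - (2 * n - 2 * p + 1 - 2 * p * n)
      ≤ ∑ i ∈ Icc (n - s + 1) n, ffunSummand n p i := by
  have hsplit : ∑ i ∈ range (n + 1), ffunSummand n p i
      = ∑ i ∈ range (n - s), ffunSummand n p i + ffunSummand n p (n - s)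
        + ∑ i ∈ Icc (n - s + 1) n, ffunSummand n p i := by
    rw [← sum_range_succ, ← Ico_add_one_right_eq_Icc, sum_range_add_sum_Ico _ (by omega)]
  have hlow : ∑ i ∈ range (n - s), ffunSummand n p i ≤ 0 :=
    sum_nonpos fun i hi => ffunSummand_nonpos hp0 hp1 (by simp at hi; omega)
  rw [sum_range_ffunSummand, ffunSummand_sub hs] at hsplit
  linarith

theorem ffunDenom_pos {n s : ℕ} (hs : 1 ≤ s) {p : ℝ} (hp : p ∈ Set.Ioo (0 : ℝ) 1) :
    0 < ffunDenom n s p := by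
  obtain ⟨hp0, hp1⟩ := hp
  have hs' : (1 : ℝ) ≤ s := by exact_mod_cast hs
  have : 0 < 1 - p := by linarith
  have : 0 < 2 * (s : ℝ) - 2 * p + 1 := by linarith
  unfold ffunDenom
  positivity

theorem choose_sub_div_le_ffun {n s : ℕ} (hs1 : 1 ≤ s) (hsn : s ≤ n) {p : ℝ}
    (hp : p ∈ Set.Ioo (0 : ℝ) 1) :
    (n.choose s : ℝ) - (2 * n - 2 * p + 1 - 2 * p * n) / ffunDenom n s p ≤ ffun n s p := by
  have hD := ffunDenom_pos (n := n) hs1 hp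
  rw [ffun_eq, sub_div' hD.ne', div_le_div_iff_of_pos_right hD]
  exact choose_mul_ffunDenom_sub_le_sum_Icc hsn hp.1.le hp.2.le

theorem stmt_11_general (n s : ℕ) (hs1 : 1 ≤ s) (hsn : s ≤ n - 1) :
    (∀ p ∈ Set.Ioo (0 : ℝ) 1,
      (n.choose s : ℝ) -
          (2 * (n : ℝ) - 2 * p + 1 - 2 * p * n) /
            (p ^ (n - s) * (1 - p) ^ s * (2 * (s : ℝ) - 2 * p + 1))
        ≤ ffun n s p) ∧
    (n.choose s : ℝ) ≤ ffun n s (1 - 1 / (2 * (n : ℝ) + 2)) := by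
  have hsn' : s ≤ n := by omega
  refine ⟨fun p hp => choose_sub_div_le_ffun hs1 hsn' hp, ?_⟩
  set p₀ : ℝ := 1 - 1 / (2 * (n : ℝ) + 2)
  have hpos : (0 : ℝ) < 2 * n + 2 := by positivity
  have hp₀ : p₀ ∈ Set.Ioo (0 : ℝ) 1 := by
    have : 1 / (2 * (n : ℝ) + 2) < 1 := by rw [div_lt_one hpos]; linarith [n.cast_nonneg (α := ℝ)]
    exact ⟨by linarith, by simp only [p₀]; linarith [one_div_pos.mpr hpos]⟩
  have hroot : 2 * (n : ℝ) - 2 * p₀ + 1 - 2 * p₀ * n = 0 := by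
    simp only [p₀]
    field_simp
    ring
  simpa [hroot] using choose_sub_div_le_ffun hs1 hsn' hp₀

theorem stmt_11 (n s : ℕ) (hn : 2 ≤ n) (hs1 : 1 ≤ s) (hsn : s ≤ n - 1) :
    (∀ p ∈ Set.Ioo (0 : ℝ) 1,
      (n.choose s : ℝ) -
          (2 * (n : ℝ) - 2 * p + 1 - 2 * p * n) /
            (p ^ (n - s) * (1 - p) ^ s * (2 * (s : ℝ) - 2 * p + 1))
        ≤ ffun n s p) ∧
    (n.choose s : ℝ) ≤ ffun n s (1 - 1 / (2 * (n : ℝ) + 2)) :=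
  stmt_11_general n s hs1 hsn
end

section
/- Let x_1,…,x_n be positive integers, B a positive integer, and 0 < ε < 1/(1 + Σ_{i=1}^n x_i). Consider a single bidder who, with probability 1−ε, is additive with value v_a(S) = Σ_{i∈S} x_i for each S ⊆ [n], and with probability ε is budgeted with value v_b(S) = min{ Σ_{i∈S} x_i, B }. A direct mechanism consists of probability distributions μ_a, μ_b on the subsets of [n] and prices τ_a, τ_b ∈ ℝ; write V_t(μ) = Σ_{S⊆[n]} μ(S)·v_t(S) for t ∈ {a,b}. The mechanism is BIC if V_a(μ_a) − τ_a ≥ V_a(μ_b) − τ_b and V_b(μ_b) − τ_b ≥ V_b(μ_a) − τ_a, IR if V_a(μ_a) − τ_a ≥ 0 and V_b(μ_b) − τ_b ≥ 0, and its revenue is (1−ε)·τ_a + ε·τ_b. Let M = max{ Σ_{i∈T} x_i : T ⊆ [n], Σ_{i∈T} x_i ≤ B }. Then every BIC and IR direct mechanism maximizing revenue satisfies: μ_a is the point mass on [n] and τ_a = Σ_{i=1}^n x_i; μ_b is supported on sets T with Σ_{i∈T} x_i = M; and τ_b = M. -/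
open Finset
open scoped BigOperators Classical

/-- A probability distribution on subsets of `[n]`. -/
def IsProb (n : ℕ) (μ : Finset (Fin n) → ℝ) : Prop :=
  (∀ S, 0 ≤ μ S) ∧ (∀ S, μ S ≤ 1) ∧ ∑ S : Finset (Fin n), μ S = 1

/-- The additive (unbudgeted) valuation. -/
def vAdd (n : ℕ) (x : Fin n → ℕ) (S : Finset (Fin n)) : ℝ := ∑ i ∈ S, (x i : ℝ)

/-- The budgeted valuation. -/
noncomputable def vBud (n : ℕ) (x : Fin n → ℕ) (B : ℕ) (S : Finset (Fin n)) : ℝ :=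
  min (∑ i ∈ S, (x i : ℝ)) (B : ℝ)

/-- Expected value of a valuation under a lottery `μ`. -/
def expVal (n : ℕ) (μ : Finset (Fin n) → ℝ) (v : Finset (Fin n) → ℝ) : ℝ :=
  ∑ S : Finset (Fin n), μ S * v S

/-- The BIC constraints for the two-type (additive / budgeted) bidder. -/
def MechBIC (n : ℕ) (x : Fin n → ℕ) (B : ℕ)
    (μa μb : Finset (Fin n) → ℝ) (τa τb : ℝ) : Prop :=
  expVal n μa (vAdd n x) - τa ≥ expVal n μb (vAdd n x) - τb ∧
  expVal n μb (vBud n x B) - τb ≥ expVal n μa (vBud n x B) - τa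

/-- The IR constraints. -/
def MechIR (n : ℕ) (x : Fin n → ℕ) (B : ℕ)
    (μa μb : Finset (Fin n) → ℝ) (τa τb : ℝ) : Prop :=
  expVal n μa (vAdd n x) - τa ≥ 0 ∧ expVal n μb (vBud n x B) - τb ≥ 0

/-- `M`: the largest value `Σ_{i∈T} x i` over subsets `T ⊆ [n]` not exceeding `B`. -/
def Mmax (n : ℕ) (x : Fin n → ℕ) (B : ℕ) : ℕ :=
  (Finset.univ.filter (fun T : Finset (Fin n) => ∑ i ∈ T, x i ≤ B)).sup
    (fun T => ∑ i ∈ T, x i)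


/-
Write the seller's revenue as `(1 - ε) τa + ε τb = (1 - ε) (τa - τb) + τb`. The additive
type's incentive constraint bounds `τa - τb` by `Va(μa) - Va(μb)`, and the budgeted type's
participation bounds `τb` by `Vb(μb)`, so the revenue is at most
`(1 - ε) Va(μa) + Σ_S μb(S) (vb(S) - (1 - ε) va(S))`. Here `Va(μa) ≤ Σ x`, with equality only
for the point mass on `[n]` since every `x i > 0`, and pointwise `vb(S) - (1 - ε) va(S) ≤ ε M`,
with equality only when `Σ_{i∈S} x i = M`: this needs `ε (1 + Σ x) < 1` for sets exceeding the
budget. Selling `[n]` at `Σ x` and a set of value `M` at `M` attains the bound, so an optimal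
mechanism makes every one of these inequalities tight.
-/

section Lotteries

variable {n : ℕ} {μ : Finset (Fin n) → ℝ}

lemma isProb_point (T : Finset (Fin n)) : IsProb n (fun S => if S = T then 1 else 0) := by
  refine ⟨fun S => ?_, fun S => ?_, by simp⟩ <;> dsimp only <;> split_ifs <;> norm_num

lemma expVal_point (T : Finset (Fin n)) (v : Finset (Fin n) → ℝ) :
    expVal n (fun S => if S = T then 1 else 0) v = v T := by
  simp [expVal, ite_mul]

lemma expVal_sub_mul (v w : Finset (Fin n) → ℝ) (c : ℝ) :
    expVal n μ (fun S => v S - c * w S) = expVal n μ v - c * expVal n μ w := by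
  simp only [expVal, mul_sub, sum_sub_distrib, mul_sum]
  congr 1
  exact sum_congr rfl fun S _ => by ring

lemma IsProb.sum_mul_const (hμ : IsProb n μ) (c : ℝ) : ∑ S, μ S * c = c := by
  rw [← sum_mul, hμ.2.2, one_mul]

lemma IsProb.expVal_le {v : Finset (Fin n) → ℝ} {c : ℝ} (hμ : IsProb n μ) (hv : ∀ S, v S ≤ c) :
    expVal n μ v ≤ c :=
  calc expVal n μ v ≤ ∑ S, μ S * c :=
        sum_le_sum fun S _ => mul_le_mul_of_nonneg_left (hv S) (hμ.1 S)
    _ = c := hμ.sum_mul_const c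

lemma IsProb.expVal_eq_of_support {v : Finset (Fin n) → ℝ} {c : ℝ} (hμ : IsProb n μ)
    (hv : ∀ S, μ S ≠ 0 → v S = c) : expVal n μ v = c :=
  calc expVal n μ v = ∑ S, μ S * c := sum_congr rfl fun S _ => by
        by_cases hS : μ S = 0
        · simp [hS]
        · rw [hv S hS]
    _ = c := hμ.sum_mul_const c

lemma IsProb.eq_of_expVal_eq {v : Finset (Fin n) → ℝ} {c : ℝ} (hμ : IsProb n μ)
    (hv : ∀ S, v S ≤ c) (hc : expVal n μ v = c) {S : Finset (Fin n)} (hS : μ S ≠ 0) : v S = c := by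
  by_contra hne
  have hlt : expVal n μ v < c :=
    calc expVal n μ v < ∑ S, μ S * c :=
          sum_lt_sum (fun T _ => mul_le_mul_of_nonneg_left (hv T) (hμ.1 T))
            ⟨S, mem_univ S, mul_lt_mul_of_pos_left ((hv S).lt_of_ne hne) ((hμ.1 S).lt_of_ne' hS)⟩
      _ = c := hμ.sum_mul_const c
  exact hlt.ne hc

lemma IsProb.eq_point_of_support {T : Finset (Fin n)} (hμ : IsProb n μ)
    (hT : ∀ S, μ S ≠ 0 → S = T) : μ = fun S => if S = T then 1 else 0 := by
  funext S
  split_ifs with hST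
  · subst hST
    rw [← hμ.2.2, sum_eq_single S (fun R _ hR => by_contra fun h => hR (hT R h)) (by simp)]
  · by_contra h
    exact hST (hT S h)

end Lotteries

section Valuations

variable {n : ℕ} {x : Fin n → ℕ} {B : ℕ}

lemma vAdd_le_sum_univ (S : Finset (Fin n)) : vAdd n x S ≤ ∑ i, (x i : ℝ) :=
  sum_le_sum_of_subset_of_nonneg (subset_univ S) fun _ _ _ => Nat.cast_nonneg _

lemma vAdd_lt_sum_univ (hx : ∀ i, 0 < x i) {S : Finset (Fin n)} (hS : S ≠ univ) :
    vAdd n x S < ∑ i, (x i : ℝ) := by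
  obtain ⟨i, -, hi⟩ := exists_of_ssubset ((subset_univ S).ssubset_of_ne hS)
  exact sum_lt_sum_of_subset (subset_univ S) (mem_univ i) hi (by exact_mod_cast hx i)
    fun _ _ _ => Nat.cast_nonneg _

lemma vBud_le_vAdd (S : Finset (Fin n)) : vBud n x B S ≤ vAdd n x S :=
  min_le_left _ _

lemma vBud_of_sum_le {S : Finset (Fin n)} (hS : ∑ i ∈ S, x i ≤ B) : vBud n x B S = vAdd n x S :=
  min_eq_left (by exact_mod_cast hS)

lemma Mmax_le : Mmax n x B ≤ B :=
  Finset.sup_le fun _ hT => (mem_filter.mp hT).2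

lemma le_Mmax {T : Finset (Fin n)} (hT : ∑ i ∈ T, x i ≤ B) : ∑ i ∈ T, x i ≤ Mmax n x B :=
  le_sup (f := fun T => ∑ i ∈ T, x i) (mem_filter.mpr ⟨mem_univ T, hT⟩)

lemma exists_sum_eq_Mmax : ∃ T : Finset (Fin n), ∑ i ∈ T, x i = Mmax n x B := by
  obtain ⟨T, -, hT⟩ := exists_mem_eq_sup
    (univ.filter fun T : Finset (Fin n) => ∑ i ∈ T, x i ≤ B)
    ⟨∅, mem_filter.mpr ⟨mem_univ _, by simp⟩⟩ (fun T => ∑ i ∈ T, x i)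
  exact ⟨T, hT.symm⟩

lemma vAdd_of_sum_eq_Mmax {S : Finset (Fin n)} (hS : ∑ i ∈ S, x i = Mmax n x B) :
    vAdd n x S = Mmax n x B := by
  simp [vAdd, ← hS]

lemma vBud_of_sum_eq_Mmax {S : Finset (Fin n)} (hS : ∑ i ∈ S, x i = Mmax n x B) :
    vBud n x B S = Mmax n x B := by
  rw [vBud_of_sum_le (hS ▸ Mmax_le), vAdd_of_sum_eq_Mmax hS]

lemma vBud_sub_vAdd_of_sum_eq_Mmax (ε : ℝ) {S : Finset (Fin n)}
    (hS : ∑ i ∈ S, x i = Mmax n x B) :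
    vBud n x B S - (1 - ε) * vAdd n x S = ε * Mmax n x B := by
  rw [vBud_of_sum_eq_Mmax hS, vAdd_of_sum_eq_Mmax hS]
  ring

lemma vBud_sub_vAdd_lt_of_sum_ne_Mmax {ε : ℝ} (hε0 : 0 < ε)
    (hε : ε * (1 + ∑ i, (x i : ℝ)) < 1) {S : Finset (Fin n)} (hS : ∑ i ∈ S, x i ≠ Mmax n x B) :
    vBud n x B S - (1 - ε) * vAdd n x S < ε * Mmax n x B := by
  have hvAdd : vAdd n x S = ((∑ i ∈ S, x i : ℕ) : ℝ) := by simp [vAdd]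
  by_cases hSB : ∑ i ∈ S, x i ≤ B
  · have hlt : ((∑ i ∈ S, x i : ℕ) : ℝ) < Mmax n x B :=
      Nat.cast_lt.mpr ((le_Mmax hSB).lt_of_ne hS)
    rw [vBud_of_sum_le hSB, hvAdd]
    nlinarith
  · -- the difference is at most `B - (1 - ε) (B + 1) = ε (B + 1) - 1 < 0`
    have hBS : (B : ℝ) + 1 ≤ vAdd n x S := by rw [hvAdd]; exact_mod_cast not_le.mp hSB
    have hSX := vAdd_le_sum_univ (x := x) S
    have hM : (0 : ℝ) ≤ Mmax n x B := Nat.cast_nonneg _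
    have hvBud : vBud n x B S = B := min_eq_right (show (B : ℝ) ≤ vAdd n x S by linarith)
    rw [hvBud]
    nlinarith

lemma vBud_sub_vAdd_le {ε : ℝ} (hε0 : 0 < ε) (hε : ε * (1 + ∑ i, (x i : ℝ)) < 1)
    (S : Finset (Fin n)) : vBud n x B S - (1 - ε) * vAdd n x S ≤ ε * Mmax n x B := by
  by_cases hS : ∑ i ∈ S, x i = Mmax n x B
  · exact (vBud_sub_vAdd_of_sum_eq_Mmax ε hS).le
  · exact (vBud_sub_vAdd_lt_of_sum_ne_Mmax hε0 hε hS).le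

end Valuations

section Mechanisms

variable {n : ℕ} {x : Fin n → ℕ} {B : ℕ}

lemma mechBIC_point_univ_point {T : Finset (Fin n)} (hT : ∑ i ∈ T, x i ≤ B) :
    MechBIC n x B (fun S => if S = univ then 1 else 0) (fun S => if S = T then 1 else 0)
      (∑ i, (x i : ℝ)) (vAdd n x T) := by
  simp only [MechBIC, expVal_point, vBud_of_sum_le hT]
  refine ⟨by simp [vAdd], ?_⟩
  linarith [vBud_le_vAdd (x := x) (B := B) univ, vAdd_le_sum_univ (x := x) univ]

lemma mechIR_point_univ_point {T : Finset (Fin n)} (hT : ∑ i ∈ T, x i ≤ B) :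
    MechIR n x B (fun S => if S = univ then 1 else 0) (fun S => if S = T then 1 else 0)
      (∑ i, (x i : ℝ)) (vAdd n x T) := by
  simp only [MechIR, expVal_point, vBud_of_sum_le hT]
  exact ⟨by simp [vAdd], by simp⟩

lemma eq_of_revenue_ge {μa μb : Finset (Fin n) → ℝ} {τa τb ε X m : ℝ} (hε1 : ε < 1)
    (hBIC : MechBIC n x B μa μb τa τb) (hIR : MechIR n x B μa μb τa τb)
    (hA : expVal n μa (vAdd n x) ≤ X)
    (hb : expVal n μb (vBud n x B) - (1 - ε) * expVal n μb (vAdd n x) ≤ ε * m)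
    (hR : (1 - ε) * X + ε * m ≤ (1 - ε) * τa + ε * τb) :
    expVal n μa (vAdd n x) = X ∧
    expVal n μb (vBud n x B) - (1 - ε) * expVal n μb (vAdd n x) = ε * m ∧
    τb = expVal n μb (vBud n x B) ∧
    τa = expVal n μa (vAdd n x) - expVal n μb (vAdd n x) + τb := by
  obtain ⟨hICa, -⟩ := hBIC
  obtain ⟨-, hIRb⟩ := hIR
  have hu : 0 < 1 - ε := by linarith
  -- the revenue gap is the sum of these four nonnegative slacks
  have hA' := mul_le_mul_of_nonneg_left hA hu.le
  have hICa' := mul_le_mul_of_nonneg_left (sub_nonneg.mpr hICa) hu.le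
  have hslack : (1 - ε) * X + ε * m - ((1 - ε) * τa + ε * τb) =
      (1 - ε) * (X - expVal n μa (vAdd n x)) +
      (1 - ε) * (expVal n μa (vAdd n x) - τa - (expVal n μb (vAdd n x) - τb)) +
      (expVal n μb (vBud n x B) - τb) +
      (ε * m - (expVal n μb (vBud n x B) - (1 - ε) * expVal n μb (vAdd n x))) := by ring
  refine ⟨le_antisymm hA ?_, ?_, ?_, ?_⟩
  · nlinarith
  · linarith
  · linarith
  · nlinarith

theorem stmt_15_general (n : ℕ) (x : Fin n → ℕ) (hx : ∀ i, 0 < x i) (B : ℕ)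
    (ε : ℝ) (hε0 : 0 < ε) (hε : ε < 1 / (1 + ∑ i, (x i : ℝ)))
    (μa μb : Finset (Fin n) → ℝ) (τa τb : ℝ)
    (hμa : IsProb n μa) (hμb : IsProb n μb)
    (hBIC : MechBIC n x B μa μb τa τb) (hIR : MechIR n x B μa μb τa τb)
    (hopt : ∀ μa' μb' τa' τb', IsProb n μa' → IsProb n μb' →
      MechBIC n x B μa' μb' τa' τb' → MechIR n x B μa' μb' τa' τb' →
      (1 - ε) * τa' + ε * τb' ≤ (1 - ε) * τa + ε * τb) :
    μa = (fun S => if S = Finset.univ then 1 else 0) ∧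
    τa = ∑ i, (x i : ℝ) ∧
    (∀ T : Finset (Fin n), μb T ≠ 0 → ∑ i ∈ T, x i = Mmax n x B) ∧
    τb = (Mmax n x B : ℝ) := by
  have hX : (0 : ℝ) ≤ ∑ i, (x i : ℝ) := sum_nonneg fun i _ => Nat.cast_nonneg (x i)
  have hεX : ε * (1 + ∑ i, (x i : ℝ)) < 1 := by rwa [lt_div_iff₀ (by positivity)] at hε
  have hε1 : ε < 1 := by nlinarith
  obtain ⟨T, hT⟩ := exists_sum_eq_Mmax (x := x) (B := B)
  have hR := hopt _ _ _ _ (isProb_point univ) (isProb_point T)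
    (mechBIC_point_univ_point (hT ▸ Mmax_le)) (mechIR_point_univ_point (hT ▸ Mmax_le))
  rw [vAdd_of_sum_eq_Mmax hT] at hR
  have hb := vBud_sub_vAdd_le (B := B) hε0 hεX
  have hVb_le : expVal n μb (vBud n x B) - (1 - ε) * expVal n μb (vAdd n x) ≤ ε * Mmax n x B := by
    rw [← expVal_sub_mul]
    exact hμb.expVal_le hb
  obtain ⟨hAX, hbM, hτb, hτa⟩ :=
    eq_of_revenue_ge hε1 hBIC hIR (hμa.expVal_le vAdd_le_sum_univ) hVb_le hR
  rw [← expVal_sub_mul] at hbM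
  have hsuppa : ∀ S, μa S ≠ 0 → S = univ := fun S hS => by_contra fun hne =>
    (vAdd_lt_sum_univ hx hne).ne (hμa.eq_of_expVal_eq vAdd_le_sum_univ hAX hS)
  have hsuppb : ∀ S, μb S ≠ 0 → ∑ i ∈ S, x i = Mmax n x B := fun S hS => by_contra fun hne =>
    (vBud_sub_vAdd_lt_of_sum_ne_Mmax hε0 hεX hne).ne (hμb.eq_of_expVal_eq hb hbM hS)
  have hVb : expVal n μb (vBud n x B) = Mmax n x B :=
    hμb.expVal_eq_of_support fun S hS => vBud_of_sum_eq_Mmax (hsuppb S hS)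
  have hVa : expVal n μb (vAdd n x) = Mmax n x B :=
    hμb.expVal_eq_of_support fun S hS => vAdd_of_sum_eq_Mmax (hsuppb S hS)
  refine ⟨hμa.eq_point_of_support hsuppa, ?_, hsuppb, hτb.trans hVb⟩
  rw [hτa, hAX, hVa, hτb, hVb]
  ring

theorem stmt_15 (n : ℕ) (x : Fin n → ℕ) (hx : ∀ i, 0 < x i) (B : ℕ) (hB : 0 < B)
    (ε : ℝ) (hε0 : 0 < ε) (hε : ε < 1 / (1 + ∑ i, (x i : ℝ)))
    (μa μb : Finset (Fin n) → ℝ) (τa τb : ℝ)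
    (hμa : IsProb n μa) (hμb : IsProb n μb)
    (hBIC : MechBIC n x B μa μb τa τb) (hIR : MechIR n x B μa μb τa τb)
    (hopt : ∀ μa' μb' τa' τb', IsProb n μa' → IsProb n μb' →
      MechBIC n x B μa' μb' τa' τb' → MechIR n x B μa' μb' τa' τb' →
      (1 - ε) * τa' + ε * τb' ≤ (1 - ε) * τa + ε * τb) :
    μa = (fun S => if S = Finset.univ then 1 else 0) ∧
    τa = ∑ i, (x i : ℝ) ∧
    (∀ T : Finset (Fin n), μb T ≠ 0 → ∑ i ∈ T, x i = Mmax n x B) ∧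
    τb = (Mmax n x B : ℝ) :=
  stmt_15_general n x hx B ε hε0 hε μa μb τa τb hμa hμb hBIC hIR hopt
end Mechanisms
end

section
/- Consider LP1 with n = 2, a = (0,0), d = (1,1), and p = (1/2, 1/2) (i.e., a single additive bidder with two items whose values are independently 0 or 1, each with probability 1/2). Then the maximum of the LP1 objective over all LP1-feasible pairs (u, q) equals 1. -/
open Finset
open scoped BigOperators Classical

/-- The valuation vector of type `S`: `a i + d i` for `i ∈ S` (high) and `a i` otherwise. -/
def vval (n : ℕ) (a d : Fin n → ℝ) (S : Finset (Fin n)) (i : Fin n) : ℝ :=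
  if i ∈ S then a i + d i else a i

/-- Feasibility for LP1: (BIC), (IR) and (PROB). -/
def LP1Feasible (n : ℕ) (a d : Fin n → ℝ) (u : Finset (Fin n) → ℝ)
    (q : Finset (Fin n) → Fin n → ℝ) : Prop :=
  (∀ S T : Finset (Fin n),
      u S ≥ u T + ∑ i, (vval n a d S i - vval n a d T i) * q T i) ∧
  (∀ S : Finset (Fin n), 0 ≤ u S) ∧
  (∀ S : Finset (Fin n), ∀ i, 0 ≤ q S i ∧ q S i ≤ 1)

/-- The LP1 objective (expected revenue). -/
def LP1Obj (n : ℕ) (a d p : Fin n → ℝ) (u : Finset (Fin n) → ℝ)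
    (q : Finset (Fin n) → Fin n → ℝ) : ℝ :=
  ∑ S : Finset (Fin n), pmass n p S * ((∑ i, vval n a d S i * q S i) - u S)

/-! By (IR) and `q ≤ 1`, revenue never exceeds the expected welfare `∑ i, (a i + p i * d i)`.
When `a = 0`, the mechanism that hands over exactly the items of the reported type and charges
their full value (`u = 0`) is BIC and extracts all of it. For two items that are each worth `1`
with probability `1/2` the expected welfare is `1`. -/

theorem Finset.sum_prod_mul_prod_compl {ι R : Type*} [Fintype ι] [DecidableEq ι] [CommSemiring R]
    (x y : ι → R) :
    ∑ S : Finset ι, (∏ i ∈ S, x i) * ∏ i ∈ Sᶜ, y i = ∏ i, (x i + y i) := by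
  simp [prod_add, compl_eq_univ_sdiff]

section ProductDistribution

variable {n : ℕ} (p : Fin n → ℝ)

theorem sum_pmass : ∑ S, pmass n p S = 1 := by
  simp [pmass, sum_prod_mul_prod_compl]

-- Replacing the factor `1 - p j` by `0` kills exactly the terms with `j ∉ S`.
theorem sum_pmass_mul_ite_mem (j : Fin n) :
    ∑ S, pmass n p S * (if j ∈ S then 1 else 0) = p j := by
  have key := sum_prod_mul_prod_compl p (fun i => if i = j then 0 else 1 - p i)
  rw [Fintype.prod_eq_single j fun i hi => by simp [hi]] at key
  simp only [if_true, add_zero] at key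
  rw [← key]
  refine sum_congr rfl fun S _ => ?_
  by_cases hj : j ∈ S
  · have hjc : j ∉ Sᶜ := by simpa using hj
    rw [if_pos hj, mul_one, pmass]
    congr 1
    exact prod_congr rfl fun i hi => by rw [if_neg (ne_of_mem_of_not_mem hi hjc)]
  · rw [if_neg hj, mul_zero]
    have hzero : ∏ i ∈ Sᶜ, (if i = j then 0 else 1 - p i) = 0 :=
      Finset.prod_eq_zero (mem_compl.2 hj) (if_pos rfl)
    rw [hzero, mul_zero]

end ProductDistribution

section LP1

def expectedWelfare (n : ℕ) (a d p : Fin n → ℝ) : ℝ :=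
  ∑ S, pmass n p S * ∑ i, vval n a d S i

variable {n : ℕ} {a d : Fin n → ℝ}

theorem lp1Feasible_indicator (hd : ∀ i, 0 ≤ d i) :
    LP1Feasible n a d 0 (fun S i => if i ∈ S then 1 else 0) := by
  refine ⟨fun S T => ?_, fun _ => le_rfl, fun S i => by dsimp only; split_ifs <;> norm_num⟩
  simp only [Pi.zero_apply, zero_add, ge_iff_le]
  refine sum_nonpos fun i _ => ?_
  by_cases hT : i ∈ T <;> by_cases hS : i ∈ S <;> simp [vval, hS, hT, hd i]

theorem lp1Obj_le_expectedWelfare {p : Fin n → ℝ} (ha : ∀ i, 0 ≤ a i) (hd : ∀ i, 0 ≤ d i)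
    (hp : ∀ i, 0 ≤ p i ∧ p i ≤ 1) {u q} (h : LP1Feasible n a d u q) :
    LP1Obj n a d p u q ≤ expectedWelfare n a d p := by
  obtain ⟨-, hu, hq⟩ := h
  refine sum_le_sum fun S _ => mul_le_mul_of_nonneg_left ?_ ?_
  · have hv : ∀ i, 0 ≤ vval n a d S i := fun i => by
      unfold vval; split_ifs <;> linarith [ha i, hd i]
    have : ∑ i, vval n a d S i * q S i ≤ ∑ i, vval n a d S i :=
      sum_le_sum fun i _ => mul_le_of_le_one_right (hv i) (hq S i).2
    linarith [hu S]
  · exact mul_nonneg (prod_nonneg fun i _ => (hp i).1)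
      (prod_nonneg fun i _ => sub_nonneg.2 (hp i).2)

theorem lp1Obj_indicator_eq_expectedWelfare (p : Fin n → ℝ) :
    LP1Obj n 0 d p 0 (fun S i => if i ∈ S then 1 else 0) =
      expectedWelfare n 0 d p := by
  refine sum_congr rfl fun S _ => ?_
  congr 1
  simp only [Pi.zero_apply, sub_zero]
  refine sum_congr rfl fun i _ => ?_
  by_cases hS : i ∈ S <;> simp [vval, hS]

theorem expectedWelfare_eq (p : Fin n → ℝ) :
    expectedWelfare n a d p = ∑ i, (a i + p i * d i) := by
  have hv : ∀ S i, vval n a d S i = a i + d i * (if i ∈ S then 1 else 0) := fun S i => by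
    by_cases hi : i ∈ S <;> simp [vval, hi]
  simp_rw [expectedWelfare, mul_sum, hv, mul_add]
  rw [sum_comm]
  refine sum_congr rfl fun i _ => ?_
  rw [sum_add_distrib, ← sum_mul, sum_pmass, one_mul]
  simp_rw [mul_left_comm _ (d i)]
  rw [← mul_sum, sum_pmass_mul_ite_mem, mul_comm]

end LP1

/-- Two items, values independently 0 or 1 each with probability 1/2:
the optimal LP1 value is 1. -/
theorem stmt_16 :
    IsGreatest
      {r : ℝ | ∃ u q, LP1Feasible 2 (fun _ => 0) (fun _ => 1) u q ∧
        r = LP1Obj 2 (fun _ => 0) (fun _ => 1) (fun _ => 1 / 2) u q}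
      1 := by
  have welfare : expectedWelfare 2 (fun _ => 0) (fun _ => 1) (fun _ => 1 / 2) = 1 := by
    rw [expectedWelfare_eq]; norm_num
  refine ⟨⟨0, _, lp1Feasible_indicator fun _ => zero_le_one,
    ((lp1Obj_indicator_eq_expectedWelfare _).trans welfare).symm⟩, ?_⟩
  rintro r ⟨u, q, h, rfl⟩
  exact (lp1Obj_le_expectedWelfare (fun _ => le_rfl) (fun _ => zero_le_one)
    (fun _ => by norm_num) h).trans welfare.le
end
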